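/- arXiv:0809.4669 — 5 statements merged into one kernel-verified Lean document; each statement's English description precedes it below -/
import Mathlib

section
/- Let φ ∈ ℂ[x₁^{±1},…,x_n^{±1}] be a Laurent polynomial, M := sup{|φ(x)| : |x₁| = ⋯ = |x_n| = 1}, and let t be a real number with 0 < t < 1/M. Then the logarithmic Mahler measure satisfies m(t^{-1} − φ) = log(1/t) − Re( Σ_{m≥1} [φ^m]₀ t^m / m ). -/
open MeasureTheory

/-- Evaluation of a Laurent polynomial `φ ∈ ℂ[x₁^{±1},…,x_n^{±1}]` at the point
`(e^{iθ₁},…,e^{iθ_n})` of the real `n`-torus. -/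
noncomputable def torusEval {n : ℕ} (φ : AddMonoidAlgebra ℂ (Fin n → ℤ)) (θ : Fin n → ℝ) : ℂ :=
  ∑ m ∈ Finsupp.support φ.coeff, φ.coeff m * ∏ j, Complex.exp (θ j * Complex.I) ^ (m j)

/-! On the torus `‖tφ‖ ≤ tM < 1`, so `log ‖t⁻¹ - φ‖ = log (1/t) + Re log (1 - tφ)` and
`-log (1 - tφ) = ∑ (tφ)^m / m`, a series dominated by the geometric series `∑ (tM)^m`; hence it
may be integrated term by term. Evaluation on the torus is a ring homomorphism, so
`(tφ)^m` is the evaluation of `t^m φ^m`, and every nonconstant character `θ ↦ e^{i⟨k, θ⟩}` has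
integral zero over `[0, 2π]^n`; so the `m`-th term integrates to `(2π)^n [φ^m]₀ t^m / m`. -/

open Real

local notation "𝕋" n:max => Set.pi Set.univ fun _ : Fin n => Set.Icc (0 : ℝ) (2 * Real.pi)

section TorusCharacter

variable {n : ℕ}

noncomputable def torusChar (θ : Fin n → ℝ) : Multiplicative (Fin n → ℤ) →* ℂ where
  toFun m := ∏ j, Complex.exp (θ j * Complex.I) ^ (m.toAdd j)
  map_one' := by simp
  map_mul' m m' := by
    rw [← Finset.prod_mul_distrib]
    refine Finset.prod_congr rfl fun j _ => ?_
    simpa using zpow_add₀ (Complex.exp_ne_zero _) (m.toAdd j) (m'.toAdd j)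

lemma continuous_torusChar (m : Multiplicative (Fin n → ℤ)) :
    Continuous fun θ : Fin n → ℝ => torusChar θ m := by
  change Continuous fun θ : Fin n → ℝ => ∏ j, Complex.exp (θ j * Complex.I) ^ (m.toAdd j)
  refine continuous_finsetProd _ fun j _ => ?_
  refine Continuous.zpow₀ ?_ _ fun _ => Or.inl (Complex.exp_ne_zero _)
  fun_prop

lemma norm_torusChar (θ : Fin n → ℝ) (m : Multiplicative (Fin n → ℤ)) :
    ‖torusChar θ m‖ = 1 := by
  simp [torusChar, norm_zpow, Complex.norm_exp]

lemma torusEval_eq_sum_torusChar (φ : AddMonoidAlgebra ℂ (Fin n → ℤ)) (θ : Fin n → ℝ) :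
    torusEval φ θ =
      ∑ m ∈ Finsupp.support φ.coeff, φ.coeff m * torusChar θ (Multiplicative.ofAdd m) :=
  rfl

lemma torusEval_eq_lift (φ : AddMonoidAlgebra ℂ (Fin n → ℤ)) (θ : Fin n → ℝ) :
    torusEval φ θ = AddMonoidAlgebra.lift ℂ ℂ (Fin n → ℤ) (torusChar θ) φ := by
  simp [torusEval_eq_sum_torusChar, AddMonoidAlgebra.lift_apply, Finsupp.sum, smul_eq_mul]

lemma torusEval_pow (φ : AddMonoidAlgebra ℂ (Fin n → ℤ)) (θ : Fin n → ℝ) (k : ℕ) :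
    torusEval (φ ^ k) θ = torusEval φ θ ^ k := by
  simp only [torusEval_eq_lift, map_pow]

lemma continuous_torusEval (φ : AddMonoidAlgebra ℂ (Fin n → ℤ)) : Continuous (torusEval φ) := by
  simp_rw [funext (torusEval_eq_sum_torusChar φ)]
  exact continuous_finsetSum _ fun m _ => continuous_const.mul (continuous_torusChar _)

lemma norm_torusEval_le (φ : AddMonoidAlgebra ℂ (Fin n → ℤ)) (θ : Fin n → ℝ) :
    ‖torusEval φ θ‖ ≤ ∑ m ∈ Finsupp.support φ.coeff, ‖φ.coeff m‖ := by
  rw [torusEval_eq_sum_torusChar]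
  refine (norm_sum_le _ _).trans (Finset.sum_le_sum fun m _ => ?_)
  rw [norm_mul, norm_torusChar, mul_one]

lemma bddAbove_range_norm_torusEval (φ : AddMonoidAlgebra ℂ (Fin n → ℤ)) :
    BddAbove (Set.range fun θ => ‖torusEval φ θ‖) :=
  ⟨_, Set.forall_mem_range.2 (norm_torusEval_le φ)⟩

end TorusCharacter

section Integrals

lemma integral_Icc_exp_mul_I_zpow (a : ℤ) :
    ∫ x in Set.Icc (0 : ℝ) (2 * π), Complex.exp (x * Complex.I) ^ a =
      if a = 0 then ((2 * π : ℝ) : ℂ) else 0 := by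
  split_ifs with ha
  · simp [ha, Real.volume_real_Icc, Real.two_pi_pos.le]
  · have hexp : ∀ x : ℝ, Complex.exp (x * Complex.I) ^ a = Complex.exp (a * Complex.I * x) := by
      intro x
      rw [← Complex.exp_int_mul]
      ring_nf
    have haI : (a : ℂ) * Complex.I ≠ 0 := by simp [ha, Complex.I_ne_zero]
    simp_rw [hexp]
    rw [integral_Icc_eq_integral_Ioc, ← intervalIntegral.integral_of_le Real.two_pi_pos.le,
      integral_exp_mul_complex haI]
    have hperiod : (a : ℂ) * Complex.I * ((2 * π : ℝ) : ℂ) = a * (2 * π * Complex.I) := by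
      push_cast; ring
    rw [hperiod, Complex.exp_int_mul_two_pi_mul_I, Complex.ofReal_zero, mul_zero,
      Complex.exp_zero, sub_self, zero_div]

lemma setIntegral_univ_pi_prod {ι 𝕜 : Type*} [Fintype ι] [RCLike 𝕜] (s : ι → Set ℝ)
    (f : ι → ℝ → 𝕜) :
    ∫ x in Set.univ.pi s, ∏ i, f i (x i) = ∏ i, ∫ x in s i, f i x := by
  rw [volume_pi, Measure.restrict_pi_pi, integral_fintype_prod_eq_prod]

variable {n : ℕ}

lemma volume_real_univ_pi_Icc : volume.real (𝕋 n) = (2 * π) ^ n := by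
  rw [measureReal_def, volume_pi_pi]
  simp [Real.volume_Icc, Real.pi_pos.le]

instance : IsFiniteMeasure (volume.restrict (𝕋 n)) :=
  isFiniteMeasure_restrict.2 (isCompact_univ_pi fun _ => isCompact_Icc).measure_lt_top.ne

lemma integral_torusChar (m : Fin n → ℤ) :
    ∫ θ in 𝕋 n, torusChar θ (Multiplicative.ofAdd m) =
      if m = 0 then (((2 * π) ^ n : ℝ) : ℂ) else 0 := by
  simp only [torusChar, MonoidHom.coe_mk, OneHom.coe_mk, toAdd_ofAdd]
  rw [setIntegral_univ_pi_prod (fun _ => Set.Icc 0 (2 * π))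
    (fun j x => Complex.exp (x * Complex.I) ^ m j)]
  simp_rw [integral_Icc_exp_mul_I_zpow]
  split_ifs with hm
  · simp [hm]
  · obtain ⟨j, hj⟩ := Function.ne_iff.mp hm
    exact Finset.prod_eq_zero (Finset.mem_univ j) (if_neg hj)

lemma integral_torusEval (ψ : AddMonoidAlgebra ℂ (Fin n → ℤ)) :
    ∫ θ in 𝕋 n, torusEval ψ θ = (((2 * π) ^ n : ℝ) : ℂ) * ψ.coeff 0 := by
  simp_rw [torusEval_eq_sum_torusChar]
  rw [integral_finsetSum _ fun m _ => ((continuous_torusChar _).const_mul _).continuousOn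
    |>.integrableOn_compact (isCompact_univ_pi fun _ => isCompact_Icc)]
  simp_rw [integral_const_mul, integral_torusChar, mul_ite, mul_zero]
  rw [Finset.sum_ite_eq']
  split_ifs with h0
  · ring
  · rw [Finsupp.notMem_support_iff.mp h0, mul_zero]

end Integrals

theorem hasSum_integral_pow_div_neg_log_one_sub {α : Type*} [MeasurableSpace α] {μ : Measure α}
    [IsFiniteMeasure μ] {z : α → ℂ} (hz : AEStronglyMeasurable z μ) {r : ℝ} (hr₀ : 0 ≤ r)
    (hr : r < 1) (hzr : ∀ᵐ x ∂μ, ‖z x‖ ≤ r) :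
    HasSum (fun k : ℕ => ∫ x, z x ^ (k + 1) / (k + 1) ∂μ) (-∫ x, Complex.log (1 - z x) ∂μ) := by
  rw [← integral_neg]
  refine hasSum_integral_of_dominated_convergence (fun k _ => r ^ (k + 1))
    (fun k => by fun_prop) (fun k => ?_) (ae_of_all _ fun _ => ?_)
    (integrable_const _) ?_
  · filter_upwards [hzr] with x hx
    have hk : (1 : ℝ) ≤ ‖(k : ℂ) + 1‖ := by norm_cast; simp
    rw [norm_div, norm_pow]
    exact (div_le_self (by positivity) hk).trans (pow_le_pow_left₀ (norm_nonneg _) hx _)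
  · exact (summable_geometric_of_lt_one hr₀ hr).comp_injective (add_left_injective 1)
  · filter_upwards [hzr] with x hx
    exact Complex.hasSum_taylorSeries_neg_log' (hx.trans_lt hr)

lemma log_norm_inv_sub_eq_add_re_log_one_sub {t : ℝ} (ht : 0 < t) {w : ℂ} (hw : ‖t * w‖ < 1) :
    Real.log ‖(t : ℂ)⁻¹ - w‖ = Real.log (1 / t) + (Complex.log (1 - t * w)).re := by
  have htC : (t : ℂ) ≠ 0 := Complex.ofReal_ne_zero.2 ht.ne'
  have hw1 : 1 - (t : ℂ) * w ≠ 0 := by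
    intro h
    rw [← sub_eq_zero.1 h, norm_one] at hw
    exact lt_irrefl _ hw
  rw [show (t : ℂ)⁻¹ - w = (t : ℂ)⁻¹ * (1 - t * w) by field_simp, norm_mul,
    Real.log_mul (by simpa using ht.ne') (norm_ne_zero_iff.2 hw1), Complex.log_re, norm_inv,
    Complex.norm_real, Real.norm_of_nonneg ht.le, one_div]

lemma integral_mul_torusEval_pow {n : ℕ} (φ : AddMonoidAlgebra ℂ (Fin n → ℤ)) (c : ℂ) (k : ℕ) :
    ∫ θ in 𝕋 n, (c * torusEval φ θ) ^ k = (((2 * π) ^ n : ℝ) : ℂ) * (c ^ k * (φ ^ k).coeff 0) := by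
  simp_rw [fun θ => show (c * torusEval φ θ) ^ k = c ^ k * torusEval (φ ^ k) θ by
    rw [mul_pow, torusEval_pow]]
  rw [integral_const_mul, integral_torusEval, mul_left_comm]

lemma hasSum_setIntegral_log_one_sub_mul_torusEval {n : ℕ} (φ : AddMonoidAlgebra ℂ (Fin n → ℤ))
    (c : ℂ) {r : ℝ} (hr₀ : 0 ≤ r) (hr : r < 1) (hc : ∀ θ, ‖c * torusEval φ θ‖ ≤ r) :
    HasSum (fun k : ℕ => (((2 * π) ^ n : ℝ) : ℂ) * ((φ ^ (k + 1)).coeff 0 * c ^ (k + 1) / (k + 1)))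
      (-∫ θ in 𝕋 n, Complex.log (1 - c * torusEval φ θ)) := by
  convert hasSum_integral_pow_div_neg_log_one_sub (μ := volume.restrict (𝕋 n))
    (z := fun θ => c * torusEval φ θ)
    (continuous_const.mul (continuous_torusEval φ)).aestronglyMeasurable hr₀ hr
    (ae_of_all _ hc) using 2 with k
  rw [integral_div, integral_mul_torusEval_pow]
  ring

lemma setIntegral_log_norm_inv_sub_torusEval {n : ℕ} (φ : AddMonoidAlgebra ℂ (Fin n → ℤ))
    {t : ℝ} (ht : 0 < t) (htφ : ∀ θ, ‖(t : ℂ) * torusEval φ θ‖ < 1) :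
    ∫ θ in 𝕋 n, Real.log ‖(t : ℂ)⁻¹ - torusEval φ θ‖ =
      (2 * π) ^ n * Real.log (1 / t) + (∫ θ in 𝕋 n, Complex.log (1 - t * torusEval φ θ)).re := by
  have hcont : Continuous fun θ => Complex.log (1 - t * torusEval φ θ) :=
    (continuous_const.sub (continuous_const.mul (continuous_torusEval φ))).clog fun θ => by
      simpa [sub_eq_add_neg] using
        Complex.mem_slitPlane_of_norm_lt_one ((norm_neg _).trans_lt (htφ θ))
  have hint : IntegrableOn (fun θ => Complex.log (1 - t * torusEval φ θ)) (𝕋 n) :=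
    hcont.continuousOn.integrableOn_compact (isCompact_univ_pi fun _ => isCompact_Icc)
  have hint_re : IntegrableOn (fun θ => (Complex.log (1 - t * torusEval φ θ)).re) (𝕋 n) :=
    hint.re
  simp_rw [log_norm_inv_sub_eq_add_re_log_one_sub ht (htφ _)]
  rw [integral_add (integrable_const _) hint_re, setIntegral_const, volume_real_univ_pi_Icc,
    smul_eq_mul]
  exact congrArg _ (integral_re hint)

lemma mul_lt_one_of_lt_one_div {t M : ℝ} (ht : 0 < t) (h : t < 1 / M) : t * M < 1 := by
  rcases le_or_gt M 0 with hM | hM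
  · nlinarith
  · rwa [lt_div_iff₀ hM] at h

/-- For `0 < t < 1/M` (`M = sup_{torus}|φ|`), the logarithmic Mahler measure
satisfies `m(t⁻¹ − φ) = log(1/t) − Re(Σ_{m≥1} [φ^m]₀ t^m / m)`. -/
theorem mahler_measure_eq (n : ℕ) (φ : AddMonoidAlgebra ℂ (Fin n → ℤ)) (t : ℝ)
    (ht0 : 0 < t) (ht1 : t < 1 / ⨆ θ : Fin n → ℝ, ‖torusEval φ θ‖) :
    (1 / (2 * Real.pi) ^ n) *
        ∫ θ : Fin n → ℝ in Set.pi Set.univ (fun _ : Fin n => Set.Icc (0 : ℝ) (2 * Real.pi)),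
          Real.log (‖(t : ℂ)⁻¹ - torusEval φ θ‖) =
      Real.log (1 / t) -
        (∑' m : ℕ, (φ ^ (m + 1)).coeff 0 * (t : ℂ) ^ (m + 1) / (m + 1)).re := by
  set M := ⨆ θ : Fin n → ℝ, ‖torusEval φ θ‖
  have hM : ∀ θ, ‖torusEval φ θ‖ ≤ M := le_ciSup (bddAbove_range_norm_torusEval φ)
  have htM : t * M < 1 := mul_lt_one_of_lt_one_div ht0 ht1
  have htφ : ∀ θ, ‖(t : ℂ) * torusEval φ θ‖ ≤ t * M := fun θ => by
    simpa [abs_of_pos ht0] using mul_le_mul_of_nonneg_left (hM θ) ht0.le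
  have hsum := hasSum_setIntegral_log_one_sub_mul_torusEval φ t ((norm_nonneg _).trans (htφ 0))
    htM htφ
  have hsum_re := congrArg Complex.re (hsum.tsum_eq.symm.trans tsum_mul_left)
  rw [Complex.re_ofReal_mul, Complex.neg_re] at hsum_re
  rw [setIntegral_log_norm_inv_sub_torusEval φ ht0 fun θ => (htφ θ).trans_lt htM]
  field_simp
  linarith
end

section
/- Let φ(x,y,z) = (x−1)(y−1)(z−1)·[(x−1)(y−1) − xyz] / (xyz) ∈ ℤ[x^{±1}, y^{±1}, z^{±1}]. Then for every integer m ≥ 0, the constant term of φ^m equals Σ_{k=0}^{m} binom(m,k)² · binom(m+k,k)². -/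
/-- The Laurent monomial `x`. -/
noncomputable def ApX : AddMonoidAlgebra ℚ (Fin 3 → ℤ) := AddMonoidAlgebra.single ![1, 0, 0] 1
/-- The Laurent monomial `y`. -/
noncomputable def ApY : AddMonoidAlgebra ℚ (Fin 3 → ℤ) := AddMonoidAlgebra.single ![0, 1, 0] 1
/-- The Laurent monomial `z`. -/
noncomputable def ApZ : AddMonoidAlgebra ℚ (Fin 3 → ℤ) := AddMonoidAlgebra.single ![0, 0, 1] 1

/-- The Apéry Laurent polynomial `φ = (x−1)(y−1)(z−1)·[(x−1)(y−1) − xyz]/(xyz)`. -/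
noncomputable def phiApery : AddMonoidAlgebra ℚ (Fin 3 → ℤ) :=
  AddMonoidAlgebra.single ![-1, -1, -1] 1 *
    ((ApX - 1) * (ApY - 1) * (ApZ - 1) * ((ApX - 1) * (ApY - 1) - ApX * ApY * ApZ))

/-!
With `w = xyz` we have `φ = w⁻¹ (x-1)(y-1)(z-1) ((x-1)(y-1) - w)`. Expanding the last factor
binomially, the `j`-th summand of `φ^m` is
`(-1)^(m-j) C(m,j) w^(-j) (x-1)^(m+j) (y-1)^(m+j) (z-1)^m`. Its constant term is
`(-1)^(m-j) C(m,j)` times the coefficient of `x^j y^j z^j` in a product of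
one-variable binomials, i.e. `((-1)^m C(m+j,j))² (-1)^(m-j) C(m,j)`, and the signs cancel.
-/

open AddMonoidAlgebra Finset

theorem single_sub_one_pow {R G : Type*} [CommRing R] [AddCommMonoid G] (g : G) (p : ℕ) :
    (single g (1 : R) - 1) ^ p =
      ∑ t ∈ range (p + 1), single (t • g) ((-1) ^ (p - t) * (p.choose t : R)) := by
  have neg_one_eq : (-1 : R[G]) = single 0 (-1) := by rw [one_def, single_neg]
  simp only [sub_eq_add_neg, add_pow, neg_one_eq, single_pow, natCast_def, single_mul_single,
    one_pow, one_mul, smul_zero, add_zero]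

theorem coeff_prod_single_sub_one_pow {R ι : Type*} [CommRing R] [Fintype ι] [DecidableEq ι]
    (p n : ι → ℕ) (hn : n ≤ p) :
    (∏ i, (single (Pi.single i 1) (1 : R) - 1) ^ p i : AddMonoidAlgebra R (ι → ℤ)).coeff
        (fun i => (n i : ℤ)) =
      ∏ i, (-1) ^ (p i - n i) * ((p i).choose (n i) : R) := by
  have sum_nsmul_single (t : ι → ℕ) :
      ∑ i, t i • (Pi.single i 1 : ι → ℤ) = fun i => (t i : ℤ) := by
    simp_rw [← Pi.single_smul, nsmul_eq_mul, mul_one, univ_sum_single]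
  simp_rw [single_sub_one_pow, prod_univ_sum, prod_single, coeff_sum,
    Finsupp.finsetSum_apply, coeff_single, sum_nsmul_single, Finsupp.single_apply]
  rw [sum_eq_single n]
  · simp
  · intro t _ htn
    refine if_neg fun h => htn (funext fun i => ?_)
    exact_mod_cast congrFun h i
  · intro hn'
    exact absurd (Fintype.mem_piFinset.2 fun i => mem_range_succ_iff.2 (hn i)) hn'

theorem phiApery_pow (m : ℕ) :
    phiApery ^ m = ∑ j ∈ range (m + 1),
      single (fun _ => -(j : ℤ)) ((-1) ^ (m - j) * (m.choose j : ℚ)) *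
        ∏ i, (single (Pi.single i 1) 1 - 1) ^ ![m + j, m + j, m] i := by
  have hX : ApX = single (Pi.single 0 1) 1 := congrArg (single · 1) (by decide)
  have hY : ApY = single (Pi.single 1 1) 1 := congrArg (single · 1) (by decide)
  have hZ : ApZ = single (Pi.single 2 1) 1 := congrArg (single · 1) (by decide)
  have hXYZ : ApX * ApY * ApZ = single 1 1 := by
    simp only [ApX, ApY, ApZ, single_mul_single, mul_one]; congr 1; decide
  rw [phiApery, hXYZ, sub_eq_add_neg (_ * _) (single _ _), mul_pow, mul_pow, add_pow,
    mul_sum, mul_sum]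
  refine sum_congr rfl fun j hj => ?_
  rw [Fin.prod_univ_three]
  simp only [Matrix.cons_val_zero, Matrix.cons_val_one, Matrix.cons_val_two, ← hX, ← hY, ← hZ]
  have hjm : j ≤ m := mem_range_succ_iff.1 hj
  calc _ = (single ![-1, -1, -1] 1 ^ m * (-single 1 1) ^ (m - j) *
          (m.choose j : ℚ[Fin 3 → ℤ])) *
        ((ApX - 1) ^ (m + j) * (ApY - 1) ^ (m + j) * (ApZ - 1) ^ m) := by
        simp only [mul_pow, pow_add]; ring
    _ = _ := by
      congr 1
      rw [← single_neg, single_pow, single_pow, natCast_def, single_mul_single, single_mul_single]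
      congr 1
      · rw [show (![-1, -1, -1] : Fin 3 → ℤ) = -1 by decide]
        funext i
        simp [Nat.cast_sub hjm]; ring
      · ring

/-- The constant term of `φ^m` equals the Apéry number
`Σ_{k=0}^{m} C(m,k)² C(m+k,k)²`. -/
theorem constantTerm_apery (m : ℕ) :
    (phiApery ^ m).coeff 0 =
      ∑ k ∈ Finset.range (m + 1), ((m.choose k : ℚ)) ^ 2 * (((m + k).choose k : ℚ)) ^ 2 := by
  rw [phiApery_pow, coeff_sum, Finsupp.finsetSum_apply]
  refine sum_congr rfl fun j hj => ?_
  have hjm : j ≤ m := mem_range_succ_iff.1 hj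
  have hn : (fun _ => j) ≤ ![m + j, m + j, m] := by
    intro i; fin_cases i <;> simp [hjm]
  have hpt : -(fun _ : Fin 3 => -(j : ℤ)) + 0 = fun _ => ((j : ℕ) : ℤ) := by funext; simp
  rw [coeff_single_mul_apply, hpt, coeff_prod_single_sub_one_pow _ _ hn, Fin.prod_univ_three]
  simp only [Matrix.cons_val_zero, Matrix.cons_val_one, Matrix.cons_val_two,
    Matrix.tail_cons, Matrix.head_cons, Nat.add_sub_cancel]
  have neg_one_pow_sq (k : ℕ) : ((-1 : ℚ) ^ k) ^ 2 = 1 := by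
    rw [← pow_mul, mul_comm, pow_mul, neg_one_sq, one_pow]
  linear_combination ((m.choose j : ℚ) * (m + j).choose j) ^ 2 *
    (((-1) ^ (m - j)) ^ 2 * neg_one_pow_sq m + neg_one_pow_sq (m - j))
end

section
/- Let N ≥ 1 and k ≥ 2 be integers and φ : ℤ/Nℤ → ℂ any function. Define the finite Fourier transform φ̂(m) := Σ_{a=0}^{N−1} φ(a) e^{−2πi m a / N} (an N-periodic function of m ∈ ℤ). Then Σ_{a=0}^{N−1} φ(a) B_k(a/N) = ((−1)^{k−1} k! / (2πi)^k) · Σ_{m∈ℤ, m≠0} φ̂(m) / m^k, where the right-hand series converges absolutely. -/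
/-!
Mathlib's Fourier expansion of the periodized Bernoulli polynomial gives, for `x ∈ [0, 1]` and
`k ≥ 2`, `B_k(x) = -(k!/(2πi)^k) Σ'_{n≠0} e^{2πinx}/n^k`; replacing `n` by `-n` turns the
exponentials into the kernel `e^{-2πinx}` of the finite Fourier transform. Taking `x = a/N`,
weighting by `φ(a)` and summing over `a` interchanges the finite sum with the series, which
converges absolutely since `|φ̂(m)| ≤ Σ_a |φ(a)|`.
-/

/-- The finite Fourier transform `φ̂(m) = Σ_{a=0}^{N−1} φ(a) e^{−2πi m a/N}`, viewed as an
`N`-periodic function of `m ∈ ℤ`. -/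
noncomputable def finiteFourier (N : ℕ) (φ : ZMod N → ℂ) (m : ℤ) : ℂ :=
  ∑ a ∈ Finset.range N, φ a * Complex.exp (-(2 * Real.pi * Complex.I) * m * a / N)

open Complex Real

lemma bernoulliFun_ratCast (k : ℕ) (q : ℚ) :
    bernoulliFun k q = (((Polynomial.bernoulli k).eval q : ℚ) : ℝ) := by
  rw [bernoulliFun, Polynomial.eval_map, ← eq_ratCast (algebraMap ℚ ℝ), Polynomial.eval₂_at_apply]
  rfl

lemma hasSum_cexp_neg_mul_div_pow {k : ℕ} (hk : 2 ≤ k) {x : ℝ} (hx : x ∈ Set.Icc 0 1) :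
    HasSum (fun n : ℤ => cexp (-(2 * π * I) * n * x) / (n : ℂ) ^ k)
      ((-1) ^ (k - 1) * (2 * π * I) ^ k / k.factorial * bernoulliFun k x) := by
  obtain ⟨j, rfl⟩ : ∃ j, k = j + 1 := ⟨k - 1, by omega⟩
  have h := (hasSum_one_div_pow_mul_fourier_mul_bernoulliFun hk hx).mul_left ((-1) ^ (j + 1))
  have hsum : ((-1) ^ (j + 1) * (-(2 * π * I) ^ (j + 1) / (j + 1).factorial *
      bernoulliFun (j + 1) x) : ℂ) =
      (-1) ^ j * (2 * π * I) ^ (j + 1) / (j + 1).factorial * bernoulliFun (j + 1) x := by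
    ring
  rw [← (Equiv.neg ℤ).hasSum_iff, add_tsub_cancel_right, ← hsum]
  refine h.congr_fun fun n => ?_
  rw [Function.comp_apply, Equiv.neg_apply, fourier_coe_apply]
  push_cast
  rw [neg_pow (n : ℂ)]
  ring_nf
  simp

lemma hasSum_finiteFourier_div_pow (N : ℕ) {k : ℕ} (hk : 2 ≤ k) (φ : ZMod N → ℂ) :
    HasSum (fun m : ℤ => finiteFourier N φ m / (m : ℂ) ^ k)
      ((-1) ^ (k - 1) * (2 * π * I) ^ k / k.factorial *
        ∑ a ∈ Finset.range N, φ a * (((Polynomial.bernoulli k).eval ((a : ℚ) / N) : ℚ) : ℂ)) := by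
  simp only [finiteFourier, Finset.sum_div, Finset.mul_sum]
  refine hasSum_sum fun a ha => ?_
  have hx : (a / N : ℝ) ∈ Set.Icc 0 1 :=
    ⟨by positivity, div_le_one_of_le₀ (mod_cast (Finset.mem_range.mp ha).le) N.cast_nonneg⟩
  have hB :
      ((bernoulliFun k (a / N) : ℝ) : ℂ) = ((Polynomial.bernoulli k).eval (a / N : ℚ) : ℚ) := by
    rw [show (a / N : ℝ) = ((a / N : ℚ) : ℝ) by push_cast; rfl, bernoulliFun_ratCast,
      ofReal_ratCast]
  rw [← hB, mul_left_comm]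
  refine ((hasSum_cexp_neg_mul_div_pow hk hx).mul_left (φ a)).congr_fun fun m => ?_
  push_cast
  simp only [mul_div_assoc]

lemma norm_finiteFourier_le (N : ℕ) (φ : ZMod N → ℂ) (m : ℤ) :
    ‖finiteFourier N φ m‖ ≤ ∑ a ∈ Finset.range N, ‖φ a‖ := by
  refine (norm_sum_le _ _).trans (Finset.sum_le_sum fun a _ => ?_)
  rw [norm_mul, Complex.norm_exp]
  simp

lemma summable_norm_finiteFourier_div_pow (N : ℕ) {k : ℕ} (hk : 2 ≤ k) (φ : ZMod N → ℂ) :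
    Summable fun m : ℤ => ‖finiteFourier N φ m / (m : ℂ) ^ k‖ := by
  have hsum : Summable fun m : ℤ => (∑ a ∈ Finset.range N, ‖φ a‖) * |1 / (m : ℝ) ^ k| :=
    (summable_abs_iff.mpr (Real.summable_one_div_int_pow.mpr hk)).mul_left _
  refine hsum.of_nonneg_of_le (fun m => norm_nonneg _) fun m => ?_
  rw [norm_div, norm_pow, norm_intCast, div_eq_mul_one_div, ← abs_pow, ← abs_one_div]
  exact mul_le_mul_of_nonneg_right (norm_finiteFourier_le N φ m) (abs_nonneg _)

theorem bernoulli_eval_eq_fourier_L_value_general (N : ℕ) (k : ℕ) (hk : 2 ≤ k)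
    (φ : ZMod N → ℂ) :
    Summable (fun m : {m : ℤ // m ≠ 0} => ‖finiteFourier N φ m / (m : ℂ) ^ k‖) ∧
      ∑ a ∈ Finset.range N, φ a * (((Polynomial.bernoulli k).eval ((a : ℚ) / N) : ℚ) : ℂ) =
        ((-1 : ℂ) ^ (k - 1) * (k.factorial : ℂ) / (2 * Real.pi * Complex.I) ^ k) *
          ∑' m : {m : ℤ // m ≠ 0}, finiteFourier N φ m / (m : ℂ) ^ k := by
  refine ⟨(summable_norm_finiteFourier_div_pow N hk φ).subtype _, ?_⟩
  have hsupp : Function.support (fun m : ℤ => finiteFourier N φ m / (m : ℂ) ^ k) ⊆ {m | m ≠ 0} :=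
    fun m hm h0 => hm (by simp [h0, zero_pow (by omega : k ≠ 0)])
  have hL : HasSum (fun m : {m : ℤ // m ≠ 0} => finiteFourier N φ m / (m : ℂ) ^ k) _ :=
    (hasSum_subtype_iff_of_support_subset hsupp).mpr (hasSum_finiteFourier_div_pow N hk φ)
  rw [hL.tsum_eq, ← mul_assoc]
  have hc : (-1 : ℂ) ^ (k - 1) * k.factorial / (2 * π * I) ^ k *
      ((-1) ^ (k - 1) * (2 * π * I) ^ k / k.factorial) = 1 := by
    field_simp [two_pi_I_ne_zero, Nat.cast_ne_zero.mpr k.factorial_ne_zero]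
    rw [← pow_mul, pow_mul', neg_one_sq, one_pow]
  rw [hc, one_mul]

/-- For `k ≥ 2` and any `φ : ℤ/Nℤ → ℂ`,
`Σ_{a=0}^{N−1} φ(a) B_k(a/N) = ((−1)^{k−1} k!/(2πi)^k) Σ'_{m≠0} φ̂(m)/m^k`, the series on the
right converging absolutely. -/
theorem bernoulli_eval_eq_fourier_L_value (N : ℕ) (hN : 1 ≤ N) (k : ℕ) (hk : 2 ≤ k)
    (φ : ZMod N → ℂ) :
    Summable (fun m : {m : ℤ // m ≠ 0} => ‖finiteFourier N φ m / (m : ℂ) ^ k‖) ∧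
      ∑ a ∈ Finset.range N, φ a * (((Polynomial.bernoulli k).eval ((a : ℚ) / N) : ℚ) : ℂ) =
        ((-1 : ℂ) ^ (k - 1) * (k.factorial : ℂ) / (2 * Real.pi * Complex.I) ^ k) *
          ∑' m : {m : ℤ // m ≠ 0}, finiteFourier N φ m / (m : ℂ) ^ k :=
  bernoulli_eval_eq_fourier_L_value_general N k hk φ
end

section
/- As x → 0⁺, one has Σ_{k=2}^{∞} e^{−kx}/(log k)² ∼ 1/(x (log x)²); that is, lim_{x→0⁺} x (log x)² Σ_{k≥2} e^{−kx}/(log k)² = 1. -/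
/-!
With `t = e^{-x}` the series is `∑_{n ≥ 2} tⁿ / (log n)²`, whose geometric mass `t² / (1 - t) ~ 1/x`
sits essentially at `n ≲ 1/x`, where `log n ≈ |log x|`. Fix `δ > 0`. The terms with
`n ≤ x^{-(1+δ)}` have `(log n)² ≤ (1 + δ)² (log x)²` and carry all of the geometric mass up to
`e^{-x^{-δ}}`, so the limit inferior is at least `(1 + δ)⁻²`. Of the remaining terms, the first
`x^{-(1-δ)}` contribute only `O(x^{δ-1}) = o(1 / (x (log x)²))`, and the others have
`(log n)² ≥ (1 - δ)² (log x)²`, so the limit superior is at most `(1 - δ)⁻²`. Let `δ → 0`.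
-/

open Real Filter Topology Finset

theorem tendsto_of_forall_bounds {ι α : Type*} {p : Filter ι} [p.NeBot] {l : Filter α}
    {f : α → ℝ} {L U : ι → ℝ} {c : ℝ} (hL : Tendsto L p (𝓝 c)) (hU : Tendsto U p (𝓝 c))
    (hlo : ∀ᶠ i in p, ∃ g : α → ℝ, Tendsto g l (𝓝 (L i)) ∧ ∀ᶠ x in l, g x ≤ f x)
    (hup : ∀ᶠ i in p, ∃ g : α → ℝ, Tendsto g l (𝓝 (U i)) ∧ ∀ᶠ x in l, f x ≤ g x) :
    Tendsto f l (𝓝 c) := by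
  rw [tendsto_order]
  refine ⟨fun a ha => ?_, fun b hb => ?_⟩
  · obtain ⟨i, hai, g, hg, hgf⟩ := ((hL.eventually (eventually_gt_nhds ha)).and hlo).exists
    filter_upwards [hg.eventually (eventually_gt_nhds hai), hgf] with x hax hxf
    exact hax.trans_le hxf
  · obtain ⟨i, hib, g, hg, hfg⟩ := ((hU.eventually (eventually_lt_nhds hb)).and hup).exists
    filter_upwards [hg.eventually (eventually_lt_nhds hib), hfg] with x hxb hfx
    exact hfx.trans_lt hxb

theorem tendsto_div_one_sub_exp_neg :
    Tendsto (fun x => x / (1 - exp (-x))) (𝓝[≠] 0) (𝓝 1) := by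
  have hderiv : HasDerivAt (fun x => 1 - exp (-x)) 1 0 := by
    simpa using ((hasDerivAt_neg (0 : ℝ)).exp).const_sub 1
  simpa [slope_def_field] using (hasDerivAt_iff_tendsto_slope.1 hderiv).inv₀ one_ne_zero

theorem tendsto_rpow_mul_log_sq {r : ℝ} (hr : 0 < r) :
    Tendsto (fun x => x ^ r * log x ^ 2) (𝓝[>] 0) (𝓝 0) := by
  have h := tendsto_log_mul_rpow_nhdsGT_zero (half_pos hr)
  have h2 : Tendsto (fun x => log x * x ^ (r / 2) * (log x * x ^ (r / 2))) (𝓝[>] 0) (𝓝 0) := by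
    simpa using h.mul h
  refine h2.congr' ?_
  filter_upwards [self_mem_nhdsWithin] with x (hx : 0 < x)
  rw [show x ^ r = x ^ (r / 2) * x ^ (r / 2) by rw [← rpow_add hx, add_halves]]
  ring

theorem log_two_le_log_add_two (k : ℕ) : log 2 ≤ log ((k : ℝ) + 2) :=
  log_le_log two_pos (le_add_of_nonneg_left k.cast_nonneg)

noncomputable def invLogSqSeries (t : ℝ) : ℝ :=
  ∑' k : ℕ, t ^ (k + 2) / log ((k : ℝ) + 2) ^ 2

section invLogSqSeries

variable {t : ℝ}

theorem summable_pow_div_log_sq (ht₀ : 0 ≤ t) (ht₁ : t < 1) :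
    Summable fun k : ℕ => t ^ (k + 2) / log ((k : ℝ) + 2) ^ 2 := by
  refine Summable.of_nonneg_of_le (fun k => div_nonneg (pow_nonneg ht₀ _) (sq_nonneg _))
    (fun k => ?_) ((summable_geometric_of_lt_one ht₀ ht₁).div_const (log 2 ^ 2))
  gcongr ?_ / ?_
  · exact pow_le_pow_of_le_one ht₀ ht₁.le (by omega)
  · exact pow_le_pow_left₀ (log_pos one_lt_two).le (log_two_le_log_add_two k) 2

theorem sub_div_log_sq_le_invLogSqSeries (ht₀ : 0 ≤ t) (ht₁ : t < 1) {M : ℕ} {y : ℝ}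
    (hMy : (M : ℝ) + 1 ≤ y) :
    (t ^ 2 - t ^ (M + 2)) / ((1 - t) * log y ^ 2) ≤ invLogSqSeries t := by
  have hgeom : ∑ k ∈ range M, t ^ (k + 2) = (t ^ 2 - t ^ (M + 2)) / (1 - t) := by
    rw [eq_div_iff (by linarith), sum_congr rfl fun k _ => pow_add t k 2, ← sum_mul,
      mul_right_comm, geom_sum_mul_neg]
    ring
  calc (t ^ 2 - t ^ (M + 2)) / ((1 - t) * log y ^ 2)
      = ∑ k ∈ range M, t ^ (k + 2) / log y ^ 2 := by rw [← sum_div, hgeom, div_div]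
    _ ≤ ∑ k ∈ range M, t ^ (k + 2) / log ((k : ℝ) + 2) ^ 2 := by
        refine sum_le_sum fun k hk => ?_
        have hky : (k : ℝ) + 2 ≤ y := by
          have : (k : ℝ) + 1 ≤ M := by exact_mod_cast mem_range.1 hk
          linarith
        have hlog := (log_pos one_lt_two).trans_le (log_two_le_log_add_two k)
        gcongr
    _ ≤ invLogSqSeries t :=
        (summable_pow_div_log_sq ht₀ ht₁).sum_le_tsum _
          fun k _ => div_nonneg (pow_nonneg ht₀ _) (sq_nonneg _)

theorem invLogSqSeries_le (ht₀ : 0 ≤ t) (ht₁ : t < 1) (N : ℕ) :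
    invLogSqSeries t ≤ N / log 2 ^ 2 + 1 / ((1 - t) * log ((N : ℝ) + 2) ^ 2) := by
  have hs := summable_pow_div_log_sq ht₀ ht₁
  rw [invLogSqSeries, ← hs.sum_add_tsum_nat_add N]
  gcongr ?_ + ?_
  · calc ∑ k ∈ range N, t ^ (k + 2) / log ((k : ℝ) + 2) ^ 2
        ≤ ∑ _k ∈ range N, 1 / log 2 ^ 2 := by
          refine sum_le_sum fun k _ => ?_
          gcongr ?_ / ?_
          · exact pow_le_one₀ ht₀ ht₁.le
          · exact pow_le_pow_left₀ (log_pos one_lt_two).le (log_two_le_log_add_two k) 2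
      _ = N / log 2 ^ 2 := by rw [sum_const, card_range, nsmul_eq_mul, mul_one_div]
  · calc ∑' k : ℕ, t ^ (k + N + 2) / log (((k + N : ℕ) : ℝ) + 2) ^ 2
        ≤ ∑' k : ℕ, t ^ k / log ((N : ℝ) + 2) ^ 2 := by
          refine ((summable_nat_add_iff N).2 hs).tsum_le_tsum (fun k => ?_)
            ((summable_geometric_of_lt_one ht₀ ht₁).div_const _)
          have hlog := (log_pos one_lt_two).trans_le (log_two_le_log_add_two N)
          gcongr ?_ / ?_
          · exact pow_le_pow_of_le_one ht₀ ht₁.le (by omega)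
          · refine pow_le_pow_left₀ hlog.le (log_le_log (by positivity) ?_) 2
            push_cast
            linarith [k.cast_nonneg (α := ℝ)]
      _ = 1 / ((1 - t) * log ((N : ℝ) + 2) ^ 2) := by
          rw [tsum_div_const, tsum_geometric_of_lt_one ht₀ ht₁, one_div, mul_inv, div_eq_mul_inv]

end invLogSqSeries

theorem exp_neg_mul_eq_pow (x : ℝ) (k : ℕ) : exp (-((k : ℝ) + 2) * x) = exp (-x) ^ (k + 2) := by
  rw [← exp_nat_mul]
  push_cast
  ring_nf

theorem le_mul_log_sq_mul_invLogSqSeries {δ x : ℝ} (hδ : 0 ≤ δ) (hx₀ : 0 < x) (hx₁ : x < 1) :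
    x / (1 - exp (-x)) * (exp (-x) ^ 2 - exp (-x ^ (-δ))) / (1 + δ) ^ 2 ≤
      x * log x ^ 2 * invLogSqSeries (exp (-x)) := by
  set t := exp (-x)
  set y := x ^ (-(1 + δ))
  set M := ⌊y - 1⌋₊
  have ht₀ : 0 ≤ t := (exp_pos _).le
  have ht₁ : t < 1 := exp_lt_one_iff.2 (neg_lt_zero.2 hx₀)
  have hlog : log x ≠ 0 := (log_neg hx₀ hx₁).ne
  have hy : 1 ≤ y := one_le_rpow_of_pos_of_le_one_of_nonpos hx₀ hx₁.le (by linarith)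
  have hMy : (M : ℝ) + 1 ≤ y := by linarith [Nat.floor_le (sub_nonneg.2 hy)]
  have hlogy : log y = -(1 + δ) * log x := log_rpow hx₀ _
  have htM : t ^ (M + 2) ≤ exp (-x ^ (-δ)) := by
    have hxy : x ^ (-δ) = x * y := by
      rw [show -δ = 1 + -(1 + δ) by ring, rpow_add hx₀, rpow_one]
    rw [← exp_nat_mul, exp_le_exp, hxy]
    have := Nat.lt_floor_add_one (y - 1)
    push_cast
    nlinarith
  calc x / (1 - t) * (t ^ 2 - exp (-x ^ (-δ))) / (1 + δ) ^ 2
      = x * log x ^ 2 * ((t ^ 2 - exp (-x ^ (-δ))) / ((1 - t) * log y ^ 2)) := by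
        rw [hlogy]
        field_simp
    _ ≤ x * log x ^ 2 * ((t ^ 2 - t ^ (M + 2)) / ((1 - t) * log y ^ 2)) := by gcongr
    _ ≤ x * log x ^ 2 * invLogSqSeries t := by
        gcongr
        exact sub_div_log_sq_le_invLogSqSeries ht₀ ht₁ hMy

theorem mul_log_sq_mul_invLogSqSeries_le {δ x : ℝ} (hδ : δ < 1) (hx₀ : 0 < x) (hx₁ : x < 1) :
    x * log x ^ 2 * invLogSqSeries (exp (-x)) ≤
      (x ^ δ + x) * log x ^ 2 / log 2 ^ 2 + x / (1 - exp (-x)) / (1 - δ) ^ 2 := by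
  set t := exp (-x)
  set y := x ^ (-(1 - δ))
  set N := ⌈y⌉₊
  have ht₀ : 0 ≤ t := (exp_pos _).le
  have ht₁ : t < 1 := exp_lt_one_iff.2 (neg_lt_zero.2 hx₀)
  have hlog : log x < 0 := log_neg hx₀ hx₁
  have hy : 0 < y := rpow_pos_of_pos hx₀ _
  have hxN : x * N ≤ x ^ δ + x := by
    have hxy : x ^ δ = x * y := by
      rw [show δ = 1 + -(1 - δ) by ring, rpow_add hx₀, rpow_one]
    rw [hxy, ← mul_add_one]
    exact mul_le_mul_of_nonneg_left (Nat.ceil_lt_add_one hy.le).le hx₀.le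
  have hlogN : (1 - δ) * -log x ≤ log ((N : ℝ) + 2) := by
    calc (1 - δ) * -log x = log y := by rw [log_rpow hx₀]; ring
      _ ≤ log ((N : ℝ) + 2) := log_le_log hy (by linarith [Nat.le_ceil y])
  have hpos : 0 < (1 - δ) * -log x := mul_pos (by linarith) (by linarith)
  have hratio : log x ^ 2 / log ((N : ℝ) + 2) ^ 2 ≤ 1 / (1 - δ) ^ 2 := by
    rw [div_le_div_iff₀ (pow_pos (hpos.trans_le hlogN) 2) (pow_pos (by linarith) 2), one_mul]
    nlinarith [pow_le_pow_left₀ hpos.le hlogN 2]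
  calc x * log x ^ 2 * invLogSqSeries t
      ≤ x * log x ^ 2 * (N / log 2 ^ 2 + 1 / ((1 - t) * log ((N : ℝ) + 2) ^ 2)) := by
        gcongr
        exact invLogSqSeries_le ht₀ ht₁ N
    _ = x * N * log x ^ 2 / log 2 ^ 2 + x / (1 - t) * (log x ^ 2 / log ((N : ℝ) + 2) ^ 2) := by
        field_simp
    _ ≤ (x ^ δ + x) * log x ^ 2 / log 2 ^ 2 + x / (1 - t) * (1 / (1 - δ) ^ 2) := by
        gcongr
    _ = (x ^ δ + x) * log x ^ 2 / log 2 ^ 2 + x / (1 - t) / (1 - δ) ^ 2 := by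
        rw [mul_one_div]

theorem exists_tendsto_le_mul_log_sq_mul_invLogSqSeries {δ : ℝ} (hδ : 0 < δ) :
    ∃ g : ℝ → ℝ, Tendsto g (𝓝[>] 0) (𝓝 (1 / (1 + δ) ^ 2)) ∧
      ∀ᶠ x in 𝓝[>] 0, g x ≤ x * log x ^ 2 * invLogSqSeries (exp (-x)) := by
  refine ⟨fun x => x / (1 - exp (-x)) * (exp (-x) ^ 2 - exp (-x ^ (-δ))) / (1 + δ) ^ 2, ?_, ?_⟩
  · have hsq : Tendsto (fun x : ℝ => exp (-x) ^ 2) (𝓝[>] 0) (𝓝 1) := by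
      have : ContinuousAt (fun x : ℝ => exp (-x) ^ 2) 0 := by fun_prop
      simpa using this.tendsto.mono_left nhdsWithin_le_nhds
    have hexp : Tendsto (fun x : ℝ => exp (-x ^ (-δ))) (𝓝[>] 0) (𝓝 0) :=
      tendsto_exp_neg_atTop_nhds_zero.comp (tendsto_rpow_neg_nhdsGT_zero (neg_lt_zero.2 hδ))
    simpa using ((tendsto_div_one_sub_exp_neg.mono_left (nhdsGT_le_nhdsNE 0)).mul
      (hsq.sub hexp)).div_const ((1 + δ) ^ 2)
  · filter_upwards [Ioo_mem_nhdsGT one_pos] with x hx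
    exact le_mul_log_sq_mul_invLogSqSeries hδ.le hx.1 hx.2

theorem exists_tendsto_mul_log_sq_mul_invLogSqSeries_le {δ : ℝ} (hδ₀ : 0 < δ) (hδ₁ : δ < 1) :
    ∃ g : ℝ → ℝ, Tendsto g (𝓝[>] 0) (𝓝 (1 / (1 - δ) ^ 2)) ∧
      ∀ᶠ x in 𝓝[>] 0, x * log x ^ 2 * invLogSqSeries (exp (-x)) ≤ g x := by
  refine ⟨fun x => (x ^ δ + x) * log x ^ 2 / log 2 ^ 2 + x / (1 - exp (-x)) / (1 - δ) ^ 2,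
    ?_, ?_⟩
  · have hsmall : Tendsto (fun x => (x ^ δ + x) * log x ^ 2) (𝓝[>] 0) (𝓝 0) := by
      simpa [add_mul] using (tendsto_rpow_mul_log_sq hδ₀).add (tendsto_rpow_mul_log_sq one_pos)
    simpa using (hsmall.div_const (log 2 ^ 2)).add
      ((tendsto_div_one_sub_exp_neg.mono_left (nhdsGT_le_nhdsNE 0)).div_const ((1 - δ) ^ 2))
  · filter_upwards [Ioo_mem_nhdsGT one_pos] with x hx
    exact mul_log_sq_mul_invLogSqSeries_le hδ₁ hx.1 hx.2

/-- As `x → 0⁺`, `Σ_{k≥2} e^{−kx}/(log k)² ∼ 1/(x (log x)²)`. -/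
theorem sum_exp_div_log_sq_asymp :
    Filter.Tendsto
      (fun x : ℝ => x * (Real.log x) ^ 2 *
        ∑' k : ℕ, Real.exp (-((k : ℝ) + 2) * x) / (Real.log ((k : ℝ) + 2)) ^ 2)
      (nhdsWithin 0 (Set.Ioi 0)) (nhds 1) := by
  simp_rw [exp_neg_mul_eq_pow, ← invLogSqSeries.eq_1]
  have hL : ContinuousAt (fun δ : ℝ => 1 / (1 + δ) ^ 2) 0 := by fun_prop (disch := norm_num)
  have hU : ContinuousAt (fun δ : ℝ => 1 / (1 - δ) ^ 2) 0 := by fun_prop (disch := norm_num)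
  refine tendsto_of_forall_bounds (p := 𝓝[>] (0 : ℝ)) (L := fun δ => 1 / (1 + δ) ^ 2)
    (U := fun δ => 1 / (1 - δ) ^ 2)
    (by simpa using hL.tendsto.mono_left nhdsWithin_le_nhds)
    (by simpa using hU.tendsto.mono_left nhdsWithin_le_nhds) ?_ ?_
  · filter_upwards [self_mem_nhdsWithin] with δ hδ
    exact exists_tendsto_le_mul_log_sq_mul_invLogSqSeries hδ
  · filter_upwards [Ioo_mem_nhdsGT one_pos] with δ hδ
    exact exists_tendsto_mul_log_sq_mul_invLogSqSeries_le hδ.1 hδ.2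
end

section
/- Let (n_k)_{k≥2} be a sequence of real numbers such that: (a) there exists C > 0 with n_k ≥ −C/(log k)² for all sufficiently large k; (b) the limit lim_{k→∞} n_k (log k)² exists in [0, +∞]; and (c) Σ_{k≥2} n_k e^{−kx} ∼ 1/(x (log x)²) as x → 0⁺. Then n_k ∼ 1/(log k)² as k → ∞, i.e. lim_{k→∞} n_k (log k)² = 1. -/
/-!
Write `L` for the limit of `a k * log k ^ 2`. If `L ≠ 1`, there is a real `t` strictly between
`L` and `1`, and eventually `a k ≤ t / log k ^ 2` (or `≥`). Comparing Laplace sums termwise, the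
finitely many exceptional terms contribute `O(1)`, which the factor `x log² x` kills, so (c) and
the Abelian asymptotic `Σ e^{-kx} / log² k ∼ 1 / (x log² x)` force `1 ≤ t` (or `t ≤ 1`).

The Abelian asymptotic comes from cutting the series at `N = ⌊x^{-θ}⌋`, where
`log N ∼ θ log (1/x)`. With `G(x) = Σ_{k≥2} e^{-kx} ∼ 1/x`: for `θ < 1` the head is `O(x^{-θ})`
and the tail is at most `G(x) / log² N`; for `θ > 1` the head alone is at least
`(1 - e^{-Nx}) G(x) / log² N` with `Nx → ∞`. Letting `θ → 1` squeezes the limit to `1`.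
-/

open Filter Real Topology Finset

noncomputable def laplaceSum (a : ℕ → ℝ) (x : ℝ) : ℝ :=
  ∑' k : ℕ, a (k + 2) * exp (-((k : ℝ) + 2) * x)

section GeometricWeights

variable {x : ℝ}

lemma exp_neg_nat_add_two_mul_le_one (hx : 0 ≤ x) (k : ℕ) : exp (-((k : ℝ) + 2) * x) ≤ 1 :=
  exp_le_one_iff.mpr (by nlinarith [k.cast_nonneg (α := ℝ)])

lemma hasSum_exp_neg_nat_add_two_mul (hx : 0 < x) :
    HasSum (fun k : ℕ => exp (-((k : ℝ) + 2) * x)) (exp (-x) / (exp x - 1)) := by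
  have hr : exp (-x) < 1 := exp_lt_one_iff.mpr (by linarith)
  have hgeom := (hasSum_geometric_of_lt_one (exp_nonneg _) hr).mul_left (exp (-x) ^ 2)
  have hterm : ∀ k : ℕ, exp (-((k : ℝ) + 2) * x) = exp (-x) ^ 2 * exp (-x) ^ k := by
    intro k
    rw [← pow_add, ← exp_nat_mul]
    push_cast; ring_nf
  have hsum : exp (-x) ^ 2 * (1 - exp (-x))⁻¹ = exp (-x) / (exp x - 1) := by
    have : exp x - 1 ≠ 0 := (sub_pos.mpr (one_lt_exp_iff.mpr hx)).ne'
    rw [exp_neg]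
    field_simp
  simpa only [hterm, hsum] using hgeom

lemma summable_mul_exp_neg_nat_add_two_mul {b : ℕ → ℝ} {B : ℝ} (hb : ∀ k, |b k| ≤ B)
    (hx : 0 < x) : Summable (fun k : ℕ => b k * exp (-((k : ℝ) + 2) * x)) := by
  refine ((hasSum_exp_neg_nat_add_two_mul hx).summable.mul_left B).of_norm_bounded fun k => ?_
  rw [norm_mul, norm_of_nonneg (exp_nonneg _)]
  exact mul_le_mul_of_nonneg_right (hb k) (exp_nonneg _)

lemma laplaceSum_one (hx : 0 < x) : laplaceSum 1 x = exp (-x) / (exp x - 1) := by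
  simpa [laplaceSum] using (hasSum_exp_neg_nat_add_two_mul hx).tsum_eq

lemma tendsto_mul_laplaceSum_one : Tendsto (fun x => x * laplaceSum 1 x) (𝓝[>] 0) (𝓝 1) := by
  have hslope : Tendsto (fun x => x⁻¹ * (exp x - 1)) (𝓝[>] 0) (𝓝 1) := by
    simpa using (hasDerivAt_exp 0).tendsto_slope_zero_right
  have hexp : Tendsto (fun x => exp (-x)) (𝓝[>] 0) (𝓝 1) := by
    have : Continuous fun x => exp (-x) := by fun_prop
    simpa using (this.tendsto 0).mono_left nhdsWithin_le_nhds
  have hlim : Tendsto (fun x => exp (-x) / (x⁻¹ * (exp x - 1))) (𝓝[>] 0) (𝓝 1) := by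
    have h := hexp.div hslope one_ne_zero
    rw [div_one] at h
    exact h
  refine hlim.congr' ?_
  filter_upwards [self_mem_nhdsWithin] with x (hx : 0 < x)
  rw [laplaceSum_one hx, div_mul_eq_div_div, div_inv_eq_mul, mul_div_assoc', mul_comm]

lemma sum_range_exp_neg_nat_add_two_mul (hx : 0 < x) (N : ℕ) :
    ∑ k ∈ range N, exp (-((k : ℝ) + 2) * x) = (1 - exp (-N * x)) * laplaceSum 1 x := by
  have hG := (hasSum_exp_neg_nat_add_two_mul hx).summable
  have hsplit := hG.sum_add_tsum_nat_add N
  have htail : ∑' k : ℕ, exp (-(((k + N : ℕ) : ℝ) + 2) * x) = exp (-N * x) * laplaceSum 1 x := by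
    simp only [laplaceSum, Pi.one_apply, one_mul, ← tsum_mul_left, ← exp_add]
    congr with k
    push_cast; ring_nf
  simp only [laplaceSum, Pi.one_apply, one_mul] at htail ⊢
  linarith

end GeometricWeights

section AntitoneWeights

variable {b : ℕ → ℝ} {x : ℝ}

lemma summable_antitone_mul_exp (hb : Antitone b) (hb0 : ∀ k, 0 ≤ b k) (hx : 0 < x) :
    Summable (fun k : ℕ => b k * exp (-((k : ℝ) + 2) * x)) :=
  summable_mul_exp_neg_nat_add_two_mul
    (fun k => (abs_of_nonneg (hb0 k)).trans_le (hb (Nat.zero_le k))) hx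

lemma tsum_antitone_mul_exp_le (hb : Antitone b) (hb0 : ∀ k, 0 ≤ b k) (hx : 0 < x) (N : ℕ) :
    ∑' k : ℕ, b k * exp (-((k : ℝ) + 2) * x) ≤ N * b 0 + b N * laplaceSum 1 x := by
  have hs := summable_antitone_mul_exp hb hb0 hx
  have hG := (hasSum_exp_neg_nat_add_two_mul hx).summable
  rw [← hs.sum_add_tsum_nat_add N]
  gcongr
  · calc ∑ k ∈ range N, b k * exp (-((k : ℝ) + 2) * x) ≤ ∑ _k ∈ range N, b 0 :=
          sum_le_sum fun k _ => (mul_le_of_le_one_right (hb0 k)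
            (exp_neg_nat_add_two_mul_le_one hx.le k)).trans (hb (Nat.zero_le k))
      _ = N * b 0 := by rw [sum_const, card_range, nsmul_eq_mul]
  · calc ∑' k : ℕ, b (k + N) * exp (-(((k + N : ℕ) : ℝ) + 2) * x)
          ≤ ∑' k : ℕ, b N * exp (-((k : ℝ) + 2) * x) := by
            refine (summable_nat_add_iff N |>.mpr hs).tsum_le_tsum (fun k => ?_) (hG.mul_left _)
            gcongr
            · exact hb0 _
            · exact hb (Nat.le_add_left N k)
            · linarith
      _ = b N * laplaceSum 1 x := by simp [laplaceSum, tsum_mul_left]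

lemma le_tsum_antitone_mul_exp (hb : Antitone b) (hb0 : ∀ k, 0 ≤ b k) (hx : 0 < x) (N : ℕ) :
    b N * (1 - exp (-N * x)) * laplaceSum 1 x ≤ ∑' k : ℕ, b k * exp (-((k : ℝ) + 2) * x) :=
  calc b N * (1 - exp (-N * x)) * laplaceSum 1 x
      = ∑ k ∈ range N, b N * exp (-((k : ℝ) + 2) * x) := by
        rw [← mul_sum, sum_range_exp_neg_nat_add_two_mul hx, mul_assoc]
    _ ≤ ∑ k ∈ range N, b k * exp (-((k : ℝ) + 2) * x) :=
        sum_le_sum fun k hk => by gcongr; exact hb (mem_range.mp hk).le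
    _ ≤ ∑' k : ℕ, b k * exp (-((k : ℝ) + 2) * x) :=
        (summable_antitone_mul_exp hb hb0 hx).sum_le_tsum _ fun k _ => by
          have := hb0 k; positivity

end AntitoneWeights

lemma tendsto_log_nat_floor_add_two_div_log :
    Tendsto (fun y : ℝ => log ((⌊y⌋₊ + 2 : ℕ) : ℝ) / log y) atTop (𝓝 1) := by
  have hupper : Tendsto (fun y => 1 + log 3 / log y) atTop (𝓝 1) := by
    simpa using (tendsto_const_nhds.div_atTop tendsto_log_atTop).const_add (1 : ℝ)
  refine tendsto_of_tendsto_of_tendsto_of_le_of_le' tendsto_const_nhds hupper ?_ ?_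
  all_goals
    filter_upwards [eventually_ge_atTop 2] with y hy
    have hlog : 0 < log y := log_pos (by linarith)
    have hfloor : y < ((⌊y⌋₊ + 2 : ℕ) : ℝ) := by push_cast; linarith [Nat.lt_floor_add_one y]
  · rw [le_div_iff₀ hlog, one_mul]
    exact log_le_log (by linarith) hfloor.le
  · rw [div_le_iff₀ hlog, add_mul, div_mul_cancel₀ _ hlog.ne', one_mul, ← log_mul (by positivity)
      (by norm_num)]
    refine log_le_log (by positivity) ?_
    push_cast
    linarith [Nat.floor_le (by linarith : 0 ≤ y)]

lemma tendsto_log_sq_div_log_nat_floor_rpow_sq {θ : ℝ} (hθ : 0 < θ) :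
    Tendsto (fun x : ℝ => log x ^ 2 / log ((⌊x ^ (-θ)⌋₊ + 2 : ℕ) : ℝ) ^ 2) (𝓝[>] 0)
      (𝓝 (θ ^ 2)⁻¹) := by
  set r : ℝ → ℝ := fun x => log ((⌊x ^ (-θ)⌋₊ + 2 : ℕ) : ℝ) / log (x ^ (-θ))
  have hr : Tendsto r (𝓝[>] 0) (𝓝 1) :=
    tendsto_log_nat_floor_add_two_div_log.comp (tendsto_rpow_neg_nhdsGT_zero (neg_lt_zero.mpr hθ))
  have hlim : Tendsto (fun x => (θ ^ 2 * r x ^ 2)⁻¹) (𝓝[>] 0) (𝓝 (θ ^ 2)⁻¹) := by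
    simpa using ((hr.pow 2).const_mul (θ ^ 2)).inv₀ (by positivity)
  refine hlim.congr' ?_
  filter_upwards [Ioo_mem_nhdsGT (zero_lt_one' ℝ)] with x ⟨hx0, hx1⟩
  have hlogx : log x ≠ 0 := (log_neg hx0 hx1).ne
  simp only [r, log_rpow hx0]
  field_simp

lemma tendsto_rpow_mul_log_sq_nhdsGT_zero {r : ℝ} (hr : 0 < r) :
    Tendsto (fun x : ℝ => x ^ r * log x ^ 2) (𝓝[>] 0) (𝓝 0) := by
  refine (by simpa using (tendsto_log_mul_rpow_nhdsGT_zero (half_pos hr)).pow 2 :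
    Tendsto (fun x : ℝ => (log x * x ^ (r / 2)) ^ 2) (𝓝[>] 0) (𝓝 0)).congr' ?_
  filter_upwards [self_mem_nhdsWithin] with x (hx : 0 < x)
  rw [mul_pow, ← rpow_mul_natCast hx.le]
  ring_nf

lemma tendsto_mul_log_sq_nhdsGT_zero : Tendsto (fun x : ℝ => x * log x ^ 2) (𝓝[>] 0) (𝓝 0) := by
  simpa using tendsto_rpow_mul_log_sq_nhdsGT_zero one_pos

lemma tendsto_mul_log_sq_mul_nat_floor_rpow {θ : ℝ} (hθ : θ < 1) :
    Tendsto (fun x : ℝ => x * log x ^ 2 * ⌊x ^ (-θ)⌋₊) (𝓝[>] 0) (𝓝 0) := by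
  refine tendsto_of_tendsto_of_tendsto_of_le_of_le' tendsto_const_nhds
    (tendsto_rpow_mul_log_sq_nhdsGT_zero (sub_pos.mpr hθ)) ?_ ?_
  all_goals filter_upwards [self_mem_nhdsWithin] with x (hx : 0 < x)
  · positivity
  · calc x * log x ^ 2 * ⌊x ^ (-θ)⌋₊ ≤ x * log x ^ 2 * x ^ (-θ) := by
          gcongr; exact Nat.floor_le (by positivity)
      _ = x ^ (1 - θ) * log x ^ 2 := by
          rw [sub_eq_add_neg, rpow_add hx, rpow_one]; ring

lemma tendsto_exp_neg_nat_floor_rpow_mul {θ : ℝ} (hθ : 1 < θ) :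
    Tendsto (fun x : ℝ => exp (-⌊x ^ (-θ)⌋₊ * x)) (𝓝[>] 0) (𝓝 0) := by
  have hpow : Tendsto (fun x : ℝ => x ^ (1 - θ) + -x) (𝓝[>] 0) atTop :=
    (tendsto_rpow_neg_nhdsGT_zero (by linarith : 1 - θ < 0)).atTop_add
      ((continuous_neg.tendsto' 0 0 neg_zero).mono_left nhdsWithin_le_nhds)
  have hfloor : Tendsto (fun x : ℝ => ⌊x ^ (-θ)⌋₊ * x) (𝓝[>] 0) atTop := by
    refine tendsto_atTop_mono' _ ?_ hpow
    filter_upwards [self_mem_nhdsWithin] with x (hx : 0 < x)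
    calc x ^ (1 - θ) + -x = (x ^ (-θ) - 1) * x := by
          rw [sub_eq_neg_add, rpow_add hx, rpow_one]; ring
      _ ≤ ⌊x ^ (-θ)⌋₊ * x := by gcongr; exact (Nat.sub_one_lt_floor _).le
  exact (tendsto_exp_neg_atTop_nhds_zero.comp hfloor).congr fun x => by simp [neg_mul]

lemma tendsto_of_eventually_le_families {α ι κ : Type*} {f : α → ℝ} {l : Filter α} {c : ℝ}
    {p : Filter ι} {q : Filter κ} [p.NeBot] [q.NeBot] {U : ι → α → ℝ} {u : ι → ℝ}
    {V : κ → α → ℝ} {v : κ → ℝ}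
    (hu : Tendsto u p (𝓝 c)) (hU : ∀ᶠ i in p, f ≤ᶠ[l] U i ∧ Tendsto (U i) l (𝓝 (u i)))
    (hv : Tendsto v q (𝓝 c)) (hV : ∀ᶠ j in q, V j ≤ᶠ[l] f ∧ Tendsto (V j) l (𝓝 (v j))) :
    Tendsto f l (𝓝 c) := by
  rw [tendsto_order]
  constructor
  · intro b hb
    obtain ⟨j, hbj, hVf, hVj⟩ := ((hv.eventually (lt_mem_nhds hb)).and hV).exists
    filter_upwards [hVf, hVj.eventually (lt_mem_nhds hbj)] with x h1 h2
    exact h2.trans_le h1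
  · intro b hb
    obtain ⟨i, hib, hfU, hUi⟩ := ((hu.eventually (gt_mem_nhds hb)).and hU).exists
    filter_upwards [hfU, hUi.eventually (gt_mem_nhds hib)] with x h1 h2
    exact h1.trans_lt h2

lemma antitone_inv_log_nat_add_two_sq : Antitone (fun k : ℕ => (log ((k + 2 : ℕ) : ℝ) ^ 2)⁻¹) := by
  intro k l hkl
  have hk : 0 < log ((k + 2 : ℕ) : ℝ) := log_pos (by push_cast; linarith [k.cast_nonneg (α := ℝ)])
  dsimp only
  gcongr

theorem tendsto_mul_log_sq_mul_laplaceSum_inv_log_sq :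
    Tendsto (fun x => x * log x ^ 2 * laplaceSum (fun k => (log k ^ 2)⁻¹) x) (𝓝[>] 0) (𝓝 1) := by
  set b : ℕ → ℝ := fun k => (log ((k + 2 : ℕ) : ℝ) ^ 2)⁻¹
  have hb : Antitone b := antitone_inv_log_nat_add_two_sq
  have hb0 : ∀ k, 0 ≤ b k := fun k => by positivity
  set N : ℝ → ℝ → ℕ := fun θ x => ⌊x ^ (-θ)⌋₊
  have hinv : Tendsto (fun θ : ℝ => (θ ^ 2)⁻¹) (𝓝 1) (𝓝 1) := by
    simpa using ((continuous_pow 2).tendsto (1 : ℝ)).inv₀ (by norm_num)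
  refine tendsto_of_eventually_le_families (p := 𝓝[<] 1) (q := 𝓝[>] 1)
    (hinv.mono_left nhdsWithin_le_nhds)
    (U := fun θ x => x * log x ^ 2 * N θ x * b 0 +
      log x ^ 2 / log ((N θ x + 2 : ℕ) : ℝ) ^ 2 * (x * laplaceSum 1 x))
    ?_ (hinv.mono_left nhdsWithin_le_nhds)
    (V := fun θ x => log x ^ 2 / log ((N θ x + 2 : ℕ) : ℝ) ^ 2 * (1 - exp (-N θ x * x)) *
      (x * laplaceSum 1 x)) ?_
  · filter_upwards [Ioo_mem_nhdsLT (zero_lt_one' ℝ)] with θ ⟨hθ0, hθ1⟩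
    refine ⟨?_, ?_⟩
    · filter_upwards [self_mem_nhdsWithin] with x (hx : 0 < x)
      calc x * log x ^ 2 * laplaceSum (fun k => (log k ^ 2)⁻¹) x
          ≤ x * log x ^ 2 * (N θ x * b 0 + b (N θ x) * laplaceSum 1 x) := by
            gcongr
            exact tsum_antitone_mul_exp_le hb hb0 hx _
        _ = _ := by simp only [b]; ring
    · simpa using ((tendsto_mul_log_sq_mul_nat_floor_rpow hθ1).mul_const (b 0)).add
        ((tendsto_log_sq_div_log_nat_floor_rpow_sq hθ0).mul tendsto_mul_laplaceSum_one)
  · filter_upwards [self_mem_nhdsWithin] with θ (hθ1 : 1 < θ)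
    refine ⟨?_, ?_⟩
    · filter_upwards [self_mem_nhdsWithin] with x (hx : 0 < x)
      calc _ = x * log x ^ 2 * (b (N θ x) * (1 - exp (-N θ x * x)) * laplaceSum 1 x) := by
            simp only [b]; ring
        _ ≤ x * log x ^ 2 * laplaceSum (fun k => (log k ^ 2)⁻¹) x := by
            gcongr
            exact le_tsum_antitone_mul_exp hb hb0 hx _
    · simpa using ((tendsto_log_sq_div_log_nat_floor_rpow_sq (by linarith)).mul
        ((tendsto_exp_neg_nat_floor_rpow_mul hθ1).const_sub 1)).mul tendsto_mul_laplaceSum_one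

section Comparison

variable {a b : ℕ → ℝ}

lemma laplaceSum_const_mul (t : ℝ) (w : ℕ → ℝ) (x : ℝ) :
    laplaceSum (fun k => t * w k) x = t * laplaceSum w x := by
  simp only [laplaceSum, mul_assoc, tsum_mul_left]

lemma exists_laplaceSum_le_add
    (hsa : ∀ x, 0 < x → Summable (fun k : ℕ => a (k + 2) * exp (-((k : ℝ) + 2) * x)))
    (hsb : ∀ x, 0 < x → Summable (fun k : ℕ => b (k + 2) * exp (-((k : ℝ) + 2) * x)))
    (h : ∀ᶠ k in atTop, a k ≤ b k) :
    ∃ D, ∀ x, 0 < x → laplaceSum a x ≤ laplaceSum b x + D := by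
  obtain ⟨K, hK⟩ := eventually_atTop.mp h
  refine ⟨∑ k ∈ range K, |a (k + 2) - b (k + 2)|, fun x hx => ?_⟩
  set d : ℕ → ℝ := fun k => (a (k + 2) - b (k + 2)) * exp (-((k : ℝ) + 2) * x)
  have hd : laplaceSum a x - laplaceSum b x = ∑' k, d k := by
    rw [laplaceSum, laplaceSum, ← (hsa x hx).tsum_sub (hsb x hx)]
    simp only [d, sub_mul]
  have hhead : ∑ k ∈ range K, d k ≤ ∑ k ∈ range K, |a (k + 2) - b (k + 2)| :=
    sum_le_sum fun k _ => (le_abs_self _).trans <| by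
      rw [abs_mul, abs_of_nonneg (exp_nonneg _)]
      exact mul_le_of_le_one_right (abs_nonneg _) (exp_neg_nat_add_two_mul_le_one hx.le k)
  have htail : ∑' k, d (k + K) ≤ 0 :=
    tsum_nonpos fun k => mul_nonpos_of_nonpos_of_nonneg
      (sub_nonpos.mpr (hK _ (by omega))) (exp_nonneg _)
  have hs : Summable d := by simpa only [d, sub_mul] using (hsa x hx).sub (hsb x hx)
  rw [← hs.sum_add_tsum_nat_add K] at hd
  linarith

lemma le_of_tendsto_mul_laplaceSum {φ : ℝ → ℝ} {α β : ℝ}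
    (hφ : Tendsto φ (𝓝[>] 0) (𝓝 0)) (hφ0 : ∀ᶠ x in 𝓝[>] 0, 0 ≤ φ x)
    (hsa : ∀ x, 0 < x → Summable (fun k : ℕ => a (k + 2) * exp (-((k : ℝ) + 2) * x)))
    (hsb : ∀ x, 0 < x → Summable (fun k : ℕ => b (k + 2) * exp (-((k : ℝ) + 2) * x)))
    (h : ∀ᶠ k in atTop, a k ≤ b k)
    (ha : Tendsto (fun x => φ x * laplaceSum a x) (𝓝[>] 0) (𝓝 α))
    (hb : Tendsto (fun x => φ x * laplaceSum b x) (𝓝[>] 0) (𝓝 β)) : α ≤ β := by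
  obtain ⟨D, hD⟩ := exists_laplaceSum_le_add hsa hsb h
  refine le_of_tendsto_of_tendsto ha (by simpa using hb.add (hφ.mul_const D)) ?_
  filter_upwards [hφ0, self_mem_nhdsWithin] with x h0 (hx : 0 < x)
  nlinarith [mul_le_mul_of_nonneg_left (hD x hx) h0]

end Comparison

section InvLogSqComparison

lemma tendsto_mul_log_sq_mul_laplaceSum_const_mul_inv_log_sq (t : ℝ) :
    Tendsto (fun x => x * log x ^ 2 * laplaceSum (fun k => t * (log k ^ 2)⁻¹) x) (𝓝[>] 0)
      (𝓝 t) := by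
  simpa [laplaceSum_const_mul, mul_left_comm] using
    tendsto_mul_log_sq_mul_laplaceSum_inv_log_sq.const_mul t

lemma summable_const_mul_inv_log_sq_mul_exp (t : ℝ) {x : ℝ} (hx : 0 < x) :
    Summable (fun k : ℕ => t * (log ((k + 2 : ℕ) : ℝ) ^ 2)⁻¹ * exp (-((k : ℝ) + 2) * x)) := by
  simpa only [mul_assoc] using (summable_antitone_mul_exp antitone_inv_log_nat_add_two_sq
    (fun k => by positivity) hx).mul_left t

variable {a : ℕ → ℝ}

lemma one_le_of_eventually_mul_log_sq_le {t : ℝ}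
    (hsum : ∀ x : ℝ, 0 < x → Summable (fun k : ℕ => a (k + 2) * exp (-((k : ℝ) + 2) * x)))
    (hc : Tendsto (fun x : ℝ => x * log x ^ 2 * laplaceSum a x) (𝓝[>] 0) (𝓝 1))
    (h : ∀ᶠ k : ℕ in atTop, a k * log k ^ 2 ≤ t) : 1 ≤ t := by
  refine le_of_tendsto_mul_laplaceSum (φ := fun x => x * log x ^ 2)
    (b := fun k => t * (log k ^ 2)⁻¹) tendsto_mul_log_sq_nhdsGT_zero ?_ hsum
    (fun x hx => summable_const_mul_inv_log_sq_mul_exp t hx) ?_ hc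
    (tendsto_mul_log_sq_mul_laplaceSum_const_mul_inv_log_sq t)
  · filter_upwards [self_mem_nhdsWithin] with x (hx : 0 < x)
    positivity
  · filter_upwards [h, eventually_ge_atTop 2] with k hk hk2
    have : 0 < log k ^ 2 := pow_pos (log_pos (by exact_mod_cast hk2)) 2
    rwa [le_mul_inv_iff₀ this]

lemma le_one_of_eventually_le_mul_log_sq {t : ℝ}
    (hsum : ∀ x : ℝ, 0 < x → Summable (fun k : ℕ => a (k + 2) * exp (-((k : ℝ) + 2) * x)))
    (hc : Tendsto (fun x : ℝ => x * log x ^ 2 * laplaceSum a x) (𝓝[>] 0) (𝓝 1))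
    (h : ∀ᶠ k : ℕ in atTop, t ≤ a k * log k ^ 2) : t ≤ 1 := by
  refine le_of_tendsto_mul_laplaceSum (φ := fun x => x * log x ^ 2)
    (a := fun k => t * (log k ^ 2)⁻¹) tendsto_mul_log_sq_nhdsGT_zero ?_
    (fun x hx => summable_const_mul_inv_log_sq_mul_exp t hx) hsum ?_
    (tendsto_mul_log_sq_mul_laplaceSum_const_mul_inv_log_sq t) hc
  · filter_upwards [self_mem_nhdsWithin] with x (hx : 0 < x)
    positivity
  · filter_upwards [h, eventually_ge_atTop 2] with k hk hk2
    have : 0 < log k ^ 2 := pow_pos (log_pos (by exact_mod_cast hk2)) 2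
    rwa [mul_inv_le_iff₀ this]

end InvLogSqComparison

lemma tendsto_of_tendsto_coe_ereal {α : Type*} {u : α → ℝ} {l : Filter α} {L : EReal} {c : ℝ}
    (hL : Tendsto (fun k => (u k : EReal)) l (𝓝 L))
    (hup : ∀ t : ℝ, (∀ᶠ k in l, u k ≤ t) → c ≤ t) (hlow : ∀ t : ℝ, (∀ᶠ k in l, t ≤ u k) → t ≤ c) :
    Tendsto u l (𝓝 c) := by
  have hLc : L = c := by
    refine le_antisymm (not_lt.mp fun hcL => ?_) (not_lt.mp fun hLc => ?_)
    · obtain ⟨t, hct, htL⟩ := EReal.lt_iff_exists_real_btwn.mp hcL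
      have htc := hlow t <| (hL.eventually (lt_mem_nhds htL)).mono fun k hk =>
        EReal.coe_le_coe_iff.mp hk.le
      exact (EReal.coe_lt_coe_iff.mp hct).not_ge htc
    · obtain ⟨t, hLt, htc⟩ := EReal.lt_iff_exists_real_btwn.mp hLc
      have hct := hup t <| (hL.eventually (gt_mem_nhds hLt)).mono fun k hk =>
        EReal.coe_le_coe_iff.mp hk.le
      exact (EReal.coe_lt_coe_iff.mp htc).not_ge hct
  exact EReal.tendsto_coe.mp (hLc ▸ hL)

theorem laplace_tauberian_general (a : ℕ → ℝ)
    (hb : ∃ L : EReal, 0 ≤ L ∧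
      Filter.Tendsto (fun k : ℕ => ((a k * (Real.log k) ^ 2 : ℝ) : EReal))
        Filter.atTop (nhds L))
    (hsum : ∀ x : ℝ, 0 < x → Summable (fun k : ℕ => a (k + 2) * Real.exp (-((k : ℝ) + 2) * x)))
    (hc : Filter.Tendsto
      (fun x : ℝ => x * (Real.log x) ^ 2 *
        ∑' k : ℕ, a (k + 2) * Real.exp (-((k : ℝ) + 2) * x))
      (nhdsWithin 0 (Set.Ioi 0)) (nhds 1)) :
    Filter.Tendsto (fun k : ℕ => a k * (Real.log k) ^ 2) Filter.atTop (nhds 1) := by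
  obtain ⟨L, -, hL⟩ := hb
  exact tendsto_of_tendsto_coe_ereal hL (fun t => one_le_of_eventually_mul_log_sq_le hsum hc)
    (fun t => le_one_of_eventually_le_mul_log_sq hsum hc)

/-- Laplace Tauberian lemma. If `(n_k)_{k≥2}` satisfies
(a) `n_k ≥ −C/(log k)²` for large `k`, (b) `lim n_k (log k)²` exists in `[0,+∞]`, and
(c) `Σ_{k≥2} n_k e^{−kx} ∼ 1/(x (log x)²)` as `x → 0⁺`, then `n_k ∼ 1/(log k)²`. -/
theorem laplace_tauberian (a : ℕ → ℝ)
    (ha : ∃ C : ℝ, 0 < C ∧ ∀ᶠ k : ℕ in Filter.atTop, -C / (Real.log k) ^ 2 ≤ a k)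
    (hb : ∃ L : EReal, 0 ≤ L ∧
      Filter.Tendsto (fun k : ℕ => ((a k * (Real.log k) ^ 2 : ℝ) : EReal))
        Filter.atTop (nhds L))
    (hsum : ∀ x : ℝ, 0 < x → Summable (fun k : ℕ => a (k + 2) * Real.exp (-((k : ℝ) + 2) * x)))
    (hc : Filter.Tendsto
      (fun x : ℝ => x * (Real.log x) ^ 2 *
        ∑' k : ℕ, a (k + 2) * Real.exp (-((k : ℝ) + 2) * x))
      (nhdsWithin 0 (Set.Ioi 0)) (nhds 1)) :
    Filter.Tendsto (fun k : ℕ => a k * (Real.log k) ^ 2) Filter.atTop (nhds 1) :=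
  laplace_tauberian_general a hb hsum hc
end
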